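/- Let N ≥ 1, K a field of characteristic zero, s ∈ K invertible, q = s², and let R(q) = 1 + Σ_{k,l} [(q - q⁻¹)·θ(l-k) + ((s - s⁻¹)²/2)·δ_{k,l}]·E_{k,l} ⊗ E_{l,k} be the quantum trigonometric R-matrix. Let R(q)^{t₁} denote the partial transpose in the first tensor factor: (M^{t₁})_{(i,k),(j,l)} = M_{(j,k),(i,l)}. Then R(q) and R(q)^{t₁} commute: R(q)·R(q)^{t₁} = R(q)^{t₁}·R(q). Similarly R(q) commutes with R(q)^{t₂}. -/

import Mathlib

/-!
Write `R(q) = 1 + X` with `X = ∑ c k l • E_{k,l} ⊗ E_{l,k}`. Either partial transpose turns `X`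
into an operator `Y = ∑ d i j • E_{i,j} ⊗ E_{i,j}`, supported on the span of the vectors
`e_i ⊗ e_i`, and `X * Y`, `Y * X` are the same kind of operator with `d i j` rescaled by `c i i`,
resp. `c j j`. The diagonal coefficient `c k k = (q - q⁻¹)/2 + (s - s⁻¹)²/2` does not depend on
`k`, so `X` and `Y` commute.
-/

open Matrix Kronecker

/-- The step function θ with values in a field: θ(x)=1 for x>0, θ(0)=1/2, θ(x)=0 for x<0. -/
noncomputable def thetaK (K : Type*) [Field K] (x : ℤ) : K :=
  if 0 < x then 1 else if x = 0 then 2⁻¹ else 0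

/-- The quantum trigonometric R-matrix
`R(q) = 1 + Σ_{k,l} [(q-q⁻¹)θ(l-k) + ((s-s⁻¹)²/2)δ_{k,l}]·E_{k,l} ⊗ E_{l,k}`, with `q = s²`. -/
noncomputable def Rq (N : ℕ) (K : Type*) [Field K] (q s : K) :
    Matrix (Fin N × Fin N) (Fin N × Fin N) K :=
  1 + ∑ k : Fin N, ∑ l : Fin N,
    ((q - q⁻¹) * thetaK K ((l : ℤ) - (k : ℤ))
        + (s - s⁻¹) ^ 2 / 2 * (if k = l then 1 else 0)) •
      (Matrix.single k l (1 : K) ⊗ₖ Matrix.single l k (1 : K))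

/-- Partial transpose in the first tensor factor: `(M^{t₁})_{(i,k),(j,l)} = M_{(j,k),(i,l)}`. -/
def pt1 {N : ℕ} {K : Type*} [Field K]
    (M : Matrix (Fin N × Fin N) (Fin N × Fin N) K) :
    Matrix (Fin N × Fin N) (Fin N × Fin N) K :=
  Matrix.of fun p q => M (q.1, p.2) (p.1, q.2)

/-- Partial transpose in the second tensor factor: `(M^{t₂})_{(i,k),(j,l)} = M_{(i,l),(j,k)}`. -/
def pt2 {N : ℕ} {K : Type*} [Field K]
    (M : Matrix (Fin N × Fin N) (Fin N × Fin N) K) :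
    Matrix (Fin N × Fin N) (Fin N × Fin N) K :=
  Matrix.of fun p q => M (p.1, q.2) (q.1, p.2)

namespace Matrix

variable {n K : Type*} [Fintype n] [DecidableEq n]

/-- `∑ k l, c k l • E_{k,l} ⊗ E_{l,k}`. -/
def weightedSwap [Zero K] (c : n → n → K) : Matrix (n × n) (n × n) K :=
  of fun p r => if p.2 = r.1 ∧ p.1 = r.2 then c p.1 p.2 else 0

/-- `∑ i j, d i j • E_{i,j} ⊗ E_{i,j}`. -/
def weightedDiagPair [Zero K] (d : n → n → K) : Matrix (n × n) (n × n) K :=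
  of fun p r => if p.1 = p.2 ∧ r.1 = r.2 then d p.1 r.1 else 0

theorem weightedSwap_mul_weightedDiagPair [Semiring K] (c d : n → n → K) :
    weightedSwap c * weightedDiagPair d = weightedDiagPair fun i j => c i i * d i j := by
  ext ⟨a, b⟩ ⟨e, f⟩
  simp only [weightedSwap, weightedDiagPair, mul_apply, of_apply, ite_and, mul_ite, ite_mul,
    zero_mul, mul_zero, Fintype.sum_prod_type, Finset.sum_ite_eq, Finset.mem_univ, if_true,
    Finset.sum_ite_irrel, Finset.sum_const_zero]
  split_ifs <;> simp_all

theorem weightedDiagPair_mul_weightedSwap [Semiring K] (c d : n → n → K) :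
    weightedDiagPair d * weightedSwap c = weightedDiagPair fun i j => d i j * c j j := by
  ext ⟨a, b⟩ ⟨e, f⟩
  simp only [weightedDiagPair, weightedSwap, mul_apply, of_apply, ite_and, mul_ite, ite_mul,
    zero_mul, mul_zero, Fintype.sum_prod_type, Finset.sum_ite_eq', Finset.mem_univ, if_true]
  split_ifs <;> simp_all

theorem commute_one_add_weightedSwap_one_add_weightedDiagPair [CommSemiring K]
    {c : n → n → K} (hc : ∀ i j, c i i = c j j) (d : n → n → K) :
    Commute (1 + weightedSwap c) (1 + weightedDiagPair d) := by
  refine (Commute.one_right _).add_right ((Commute.one_left _).add_left ?_)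
  show weightedSwap c * weightedDiagPair d = weightedDiagPair d * weightedSwap c
  rw [weightedSwap_mul_weightedDiagPair, weightedDiagPair_mul_weightedSwap]
  congr 1
  ext i j
  rw [hc i j, mul_comm]

end Matrix

section

variable {N : ℕ} {K : Type*} [Field K]

theorem pt1_one_add_weightedSwap (c : Fin N → Fin N → K) :
    pt1 (1 + weightedSwap c) = 1 + weightedDiagPair fun i j => c j i := by
  ext ⟨a, b⟩ ⟨e, f⟩
  simp only [pt1, weightedSwap, weightedDiagPair, Matrix.add_apply, one_apply, of_apply, Prod.mk.injEq]
  grind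

theorem pt2_one_add_weightedSwap (c : Fin N → Fin N → K) :
    pt2 (1 + weightedSwap c) = 1 + weightedDiagPair c := by
  ext ⟨a, b⟩ ⟨e, f⟩
  simp only [pt2, weightedSwap, weightedDiagPair, Matrix.add_apply, one_apply, of_apply, Prod.mk.injEq]
  grind

noncomputable def RqCoeff (q s : K) (k l : Fin N) : K :=
  (q - q⁻¹) * thetaK K ((l : ℤ) - (k : ℤ)) + (s - s⁻¹) ^ 2 / 2 * (if k = l then 1 else 0)

theorem RqCoeff_self (q s : K) (i j : Fin N) : RqCoeff q s i i = RqCoeff q s j j := by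
  simp [RqCoeff]

theorem Rq_eq_one_add_weightedSwap (q s : K) : Rq N K q s = 1 + weightedSwap (RqCoeff q s) := by
  ext ⟨a, b⟩ ⟨e, f⟩
  simp only [Rq, RqCoeff, weightedSwap, Matrix.add_apply, Matrix.sum_apply, Matrix.smul_apply, kroneckerMap_apply,
    single_apply, of_apply, ite_and, smul_eq_mul, mul_ite, mul_one, mul_zero, Finset.sum_ite_eq',
    Finset.mem_univ, if_true]
  grind

end

theorem Rq_commutes_partial_transposes_general (N : ℕ)
    (K : Type*) [Field K] (s : K) (q : K) :
    Rq N K q s * pt1 (Rq N K q s) = pt1 (Rq N K q s) * Rq N K q s ∧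
      Rq N K q s * pt2 (Rq N K q s) = pt2 (Rq N K q s) * Rq N K q s := by
  rw [Rq_eq_one_add_weightedSwap, pt1_one_add_weightedSwap, pt2_one_add_weightedSwap]
  exact ⟨(commute_one_add_weightedSwap_one_add_weightedDiagPair (RqCoeff_self q s) _).eq,
    (commute_one_add_weightedSwap_one_add_weightedDiagPair (RqCoeff_self q s) _).eq⟩

/-- `R(q)` commutes with its partial transposes `R(q)^{t₁}` and `R(q)^{t₂}`. -/
theorem Rq_commutes_partial_transposes (N : ℕ) (hN : 1 ≤ N)
    (K : Type*) [Field K] [CharZero K] (s : K) (hs : s ≠ 0) (q : K) (hq : q = s ^ 2) :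
    Rq N K q s * pt1 (Rq N K q s) = pt1 (Rq N K q s) * Rq N K q s ∧
      Rq N K q s * pt2 (Rq N K q s) = pt2 (Rq N K q s) * Rq N K q s :=
  Rq_commutes_partial_transposes_general N K s q
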